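/- Let f : ℝ → ℝ be C^n on [a',b] with a', b integers, a' < b, n ≥ 2, p ≥ 0, and suppose [a',b] can be divided into l subintervals on each of which f^{(n-1)} is monotone. Let M_max and M_min be the maximum and minimum of f^{(n-1)} on [a',b]. Then |R_{np}| ≤ T_{n,p} · l · (M_max - M_min), where R_{np} = (-1)^n ∫_{a'}^b ∑_{|k|>p} e^{2πikx}/(2πik)^n f^{(n)}(x) dx and T_{n,p} = (2/(2π)^n)(ζ(n) - ∑_{k=1}^p k^{-n}). -/

import Mathlib

open Real intervalIntegral

/-- `∑_{|k|>p} e^{2πikx}/(2πik)^n`. -/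
noncomputable def cTail (n p : ℕ) (x : ℝ) : ℂ :=
  ∑' k : {k : ℤ // p < k.natAbs},
    Complex.exp (2 * Real.pi * Complex.I * ((k : ℤ) : ℂ) * x) /
      (2 * Real.pi * Complex.I * ((k : ℤ) : ℂ)) ^ n

/-- `T_{n,p} = (2/(2π)^n) (ζ(n) - ∑_{k=1}^p k^{-n})` with `ζ(n) = ∑_{k≥1} k^{-n}`. -/
noncomputable def Tnp (n p : ℕ) : ℝ :=
  2 / (2 * Real.pi) ^ n *
    ((∑' k : ℕ, 1 / ((k : ℝ) + 1) ^ n) - ∑ k ∈ Finset.Icc 1 p, 1 / (k : ℝ) ^ n)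

/-!
Each term of the tail has modulus `1 / (2π|k|)^n`, and these moduli sum over `|k| > p` to
exactly `T_{n,p}`, so `|R_{np}| ≤ T_{n,p} ∫ |f^{(n)}|`. On a piece where `f^{(n-1)}` is monotone,
`f^{(n)}` has constant sign, so by the fundamental theorem of calculus the integral of `|f^{(n)}|`
over it is `|f^{(n-1)}(t_{i+1}) - f^{(n-1)}(t_i)| ≤ M_max - M_min`.
-/

open Set Finset MeasureTheory

open scoped Interval

theorem hasSum_subtype_natAbs_gt {G : Type*} [AddCommGroup G] [TopologicalSpace G]
    [IsTopologicalAddGroup G] {φ : ℕ → G} {a : G} {p : ℕ}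
    (h : HasSum (fun m ↦ φ (m + (p + 1))) a) :
    HasSum (fun k : {k : ℤ // p < k.natAbs} ↦ φ k.1.natAbs) (a + a) := by
  let ψ : ℕ → G := fun m ↦ if p < m then φ m else 0
  have hψ : HasSum ψ a := by
    have hhead : ∑ i ∈ range (p + 1), ψ i = 0 :=
      sum_eq_zero fun i hi ↦ if_neg (by rw [Finset.mem_range] at hi; omega)
    rw [← hasSum_nat_add_iff' (p + 1), hhead, sub_zero]
    exact h.congr_fun fun m ↦ if_pos (by omega)
  have hψ1 : HasSum (fun m ↦ ψ (m + 1)) a := by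
    simpa [ψ] using (hasSum_nat_add_iff' 1).mpr hψ
  refine (hasSum_subtype_iff_indicator (f := fun k : ℤ ↦ φ k.natAbs)
    (s := {k : ℤ | p < k.natAbs})).mpr ?_
  refine HasSum.of_nat_of_neg_add_one (hψ.congr_fun fun m ↦ ?_) (hψ1.congr_fun fun m ↦ ?_)
  · simp [ψ, indicator]
  · have : (-((m : ℤ) + 1)).natAbs = m + 1 := by omega
    simp only [indicator, Set.mem_ofPred_eq, this, ψ]

theorem hasSum_one_div_nat_add_pow {n : ℕ} (hn : 2 ≤ n) (p : ℕ) :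
    HasSum (fun m : ℕ ↦ 1 / ((m + (p + 1) : ℕ) : ℝ) ^ n)
      ((∑' k : ℕ, 1 / ((k : ℝ) + 1) ^ n) - ∑ k ∈ Icc 1 p, 1 / (k : ℝ) ^ n) := by
  have hsum : Summable fun k : ℕ ↦ 1 / ((k : ℝ) + 1) ^ n := by
    simpa using (summable_nat_add_iff 1).mpr (Real.summable_one_div_nat_pow.mpr (by omega))
  have hhead : ∑ k ∈ Icc 1 p, 1 / (k : ℝ) ^ n = ∑ k ∈ range p, 1 / ((k : ℝ) + 1) ^ n := by
    rw [← Finset.Ico_add_one_right_eq_Icc, sum_Ico_eq_sum_range]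
    simp [add_comm]
  rw [hhead]
  refine ((hasSum_nat_add_iff' p).mpr hsum.hasSum).congr_fun fun m ↦ ?_
  push_cast
  ring

theorem norm_exp_div_pow (n : ℕ) (k : ℤ) (x : ℝ) :
    ‖Complex.exp (2 * π * Complex.I * k * x) / (2 * π * Complex.I * k) ^ n‖ =
      1 / (2 * π * k.natAbs) ^ n := by
  rw [norm_div, norm_pow, Complex.norm_exp]
  simp [Complex.mul_re, abs_of_pos pi_pos]

theorem hasSum_one_div_two_pi_natAbs_pow {n : ℕ} (hn : 2 ≤ n) (p : ℕ) :
    HasSum (fun k : {k : ℤ // p < k.natAbs} ↦ 1 / (2 * π * k.1.natAbs) ^ n) (Tnp n p) := by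
  have h := (hasSum_one_div_nat_add_pow hn p).mul_left (1 / (2 * π) ^ n)
  have hsum := hasSum_subtype_natAbs_gt (φ := fun m : ℕ ↦ 1 / (2 * π * m) ^ n)
    (h.congr_fun fun m ↦ by rw [mul_pow, one_div_mul_one_div])
  rwa [← two_mul, ← mul_assoc, mul_one_div, ← Tnp] at hsum

theorem norm_cTail_le {n : ℕ} (hn : 2 ≤ n) (p : ℕ) (x : ℝ) : ‖cTail n p x‖ ≤ Tnp n p :=
  tsum_of_norm_bounded (hasSum_one_div_two_pi_natAbs_pow hn p) fun k ↦ (norm_exp_div_pow n k x).le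

section PiecewiseMonotone

variable {g g' : ℝ → ℝ} {u v x : ℝ}

theorem HasDerivAt.nonneg_of_monotoneOn_Icc (hd : HasDerivAt g (g' x) x)
    (hg : MonotoneOn g (Set.Icc u v)) (hx : x ∈ Ioo u v) : 0 ≤ g' x :=
  hd.hasDerivWithinAt.nonneg_of_monotoneOn (uniqueDiffWithinAt_iff_accPt.mp
    (uniqueDiffOn_Icc (hx.1.trans hx.2) x (Ioo_subset_Icc_self hx))) hg

theorem integral_abs_deriv_eq_of_monotoneOn (huv : u ≤ v) (hcont : ContinuousOn g (Set.Icc u v))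
    (hderiv : ∀ x ∈ Ioo u v, HasDerivAt g (g' x) x) (hint : IntervalIntegrable g' volume u v)
    (hg : MonotoneOn g (Set.Icc u v)) :
    ∫ x in u..v, |g' x| = |g v - g u| := by
  have habs : ∀ x ∈ Ioo u v, HasDerivWithinAt g |g' x| (Ioi x) x := fun x hx ↦ by
    rw [abs_of_nonneg ((hderiv x hx).nonneg_of_monotoneOn_Icc hg hx)]
    exact (hderiv x hx).hasDerivWithinAt
  rw [integral_eq_sub_of_hasDeriv_right_of_le huv hcont habs hint.abs,
    abs_of_nonneg (sub_nonneg.2 (hg ⟨le_rfl, huv⟩ ⟨huv, le_rfl⟩ huv))]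

theorem integral_abs_deriv_eq_of_monotoneOn_or_antitoneOn (huv : u ≤ v)
    (hcont : ContinuousOn g (Set.Icc u v)) (hderiv : ∀ x ∈ Ioo u v, HasDerivAt g (g' x) x)
    (hint : IntervalIntegrable g' volume u v)
    (hg : MonotoneOn g (Set.Icc u v) ∨ AntitoneOn g (Set.Icc u v)) :
    ∫ x in u..v, |g' x| = |g v - g u| := by
  rcases hg with hg | hg
  · exact integral_abs_deriv_eq_of_monotoneOn huv hcont hderiv hint hg
  · have := integral_abs_deriv_eq_of_monotoneOn (g := -g) (g' := -g') huv hcont.neg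
      (fun x hx ↦ (hderiv x hx).neg) hint.neg hg.neg
    simpa [neg_add_eq_sub, abs_sub_comm] using this

theorem integral_abs_deriv_le_mul_sSup_sub_sInf {l : ℕ} {t : ℕ → ℝ}
    (ht : ∀ i < l, t i ≤ t (i + 1)) (hcont : ContinuousOn g (Set.Icc (t 0) (t l)))
    (hderiv : ∀ x ∈ Ioo (t 0) (t l), HasDerivAt g (g' x) x)
    (hint : IntervalIntegrable g' volume (t 0) (t l))
    (hpieces : ∀ i < l,
      MonotoneOn g (Set.Icc (t i) (t (i + 1))) ∨ AntitoneOn g (Set.Icc (t i) (t (i + 1)))) :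
    ∫ x in t 0..t l, |g' x| ≤
      l * (sSup (g '' Set.Icc (t 0) (t l)) - sInf (g '' Set.Icc (t 0) (t l))) := by
  have hmono : MonotoneOn t (Set.Iic l) :=
    monotoneOn_of_le_succ ordConnected_Iic fun i _ _ hi ↦ ht i (by simpa using hi)
  have hsub : ∀ i < l, Set.Icc (t i) (t (i + 1)) ⊆ Set.Icc (t 0) (t l) := fun i hi ↦
    Icc_subset_Icc (hmono (mem_Iic.2 l.zero_le) (mem_Iic.2 hi.le) i.zero_le)
      (hmono (mem_Iic.2 hi) (mem_Iic.2 le_rfl) hi)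
  have h0l : t 0 ≤ t l := hmono (mem_Iic.2 l.zero_le) (mem_Iic.2 le_rfl) l.zero_le
  have huIcc : ∀ i < l, [[t i, t (i + 1)]] ⊆ [[t 0, t l]] := fun i hi ↦ by
    rw [uIcc_of_le (ht i hi), uIcc_of_le h0l]
    exact hsub i hi
  have hbdd : Bornology.IsBounded (g '' Set.Icc (t 0) (t l)) :=
    (isCompact_Icc.image_of_continuousOn hcont).isBounded
  have hpiece : ∀ i < l, ∫ x in t i..t (i + 1), |g' x| ≤
      sSup (g '' Set.Icc (t 0) (t l)) - sInf (g '' Set.Icc (t 0) (t l)) := fun i hi ↦ by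
    rw [integral_abs_deriv_eq_of_monotoneOn_or_antitoneOn (ht i hi) (hcont.mono (hsub i hi))
      (fun x hx ↦ hderiv x (Ioo_subset_Ioo (hsub i hi ⟨le_rfl, ht i hi⟩).1
        (hsub i hi ⟨ht i hi, le_rfl⟩).2 hx))
      (hint.mono_set (huIcc i hi)) (hpieces i hi), ← Real.diam_eq hbdd]
    exact Metric.dist_le_diam_of_mem hbdd (mem_image_of_mem g (hsub i hi ⟨ht i hi, le_rfl⟩))
      (mem_image_of_mem g (hsub i hi ⟨le_rfl, ht i hi⟩))
  rw [← sum_integral_adjacent_intervals fun i hi ↦ (hint.mono_set (huIcc i hi)).abs]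
  calc ∑ i ∈ range l, ∫ x in t i..t (i + 1), |g' x|
      ≤ ∑ _i ∈ range l, (sSup (g '' Set.Icc (t 0) (t l)) - sInf (g '' Set.Icc (t 0) (t l))) :=
        sum_le_sum fun i hi ↦ hpiece i (mem_range.mp hi)
    _ = _ := by simp [mul_sub]

end PiecewiseMonotone

theorem hasDerivAt_iteratedDerivWithin_Icc {f : ℝ → ℝ} {a b x : ℝ} {n k : ℕ}
    (hf : ContDiffOn ℝ n f (Set.Icc a b)) (hk : k < n) (hx : x ∈ Ioo a b) :
    HasDerivAt (iteratedDerivWithin k f (Set.Icc a b))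
      (iteratedDerivWithin (k + 1) f (Set.Icc a b) x) x := by
  have hud : UniqueDiffOn ℝ (Set.Icc a b) := uniqueDiffOn_Icc (hx.1.trans hx.2)
  rw [iteratedDerivWithin_succ]
  exact ((hf.differentiableOn_iteratedDerivWithin (by exact_mod_cast hk) hud) x
    (Ioo_subset_Icc_self hx)).hasDerivWithinAt.hasDerivAt (Icc_mem_nhds hx.1 hx.2)

theorem memf_remainder_estimate_monotone_pieces_general (f : ℝ → ℝ) (a' b : ℤ) (hab : a' < b)
    (n : ℕ) (hn : 2 ≤ n) (p : ℕ) (l : ℕ)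
    (hf : ContDiffOn ℝ n f (Set.Icc (a' : ℝ) (b : ℝ)))
    (t : ℕ → ℝ) (ht0 : t 0 = (a' : ℝ)) (htl : t l = (b : ℝ))
    (htmono : ∀ i < l, t i < t (i + 1))
    (hpieces : ∀ i < l,
      MonotoneOn (iteratedDerivWithin (n - 1) f (Set.Icc (a' : ℝ) (b : ℝ)))
          (Set.Icc (t i) (t (i + 1))) ∨
        AntitoneOn (iteratedDerivWithin (n - 1) f (Set.Icc (a' : ℝ) (b : ℝ)))
          (Set.Icc (t i) (t (i + 1)))) :
    ‖(-1 : ℂ) ^ n * ∫ x in (a' : ℝ)..(b : ℝ),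
        cTail n p x *
          Complex.ofReal (iteratedDerivWithin n f (Set.Icc (a' : ℝ) (b : ℝ)) x)‖ ≤
      Tnp n p * l *
        (sSup (iteratedDerivWithin (n - 1) f (Set.Icc (a' : ℝ) (b : ℝ)) ''
            Set.Icc (a' : ℝ) (b : ℝ)) -
          sInf (iteratedDerivWithin (n - 1) f (Set.Icc (a' : ℝ) (b : ℝ)) ''
            Set.Icc (a' : ℝ) (b : ℝ))) := by
  have hAB : (a' : ℝ) < b := by exact_mod_cast hab
  set s := Set.Icc (a' : ℝ) b
  set G := iteratedDerivWithin n f s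
  have hud : UniqueDiffOn ℝ s := uniqueDiffOn_Icc hAB
  have hG : ContinuousOn G s := hf.continuousOn_iteratedDerivWithin le_rfl hud
  have hg : ContinuousOn (iteratedDerivWithin (n - 1) f s) s :=
    hf.continuousOn_iteratedDerivWithin (by exact_mod_cast n.sub_le 1) hud
  have hderiv : ∀ x ∈ Ioo (a' : ℝ) b, HasDerivAt (iteratedDerivWithin (n - 1) f s) (G x) x :=
    fun x hx ↦ by
      have := hasDerivAt_iteratedDerivWithin_Icc hf (Nat.sub_lt (by omega) one_pos) hx
      rwa [Nat.sub_add_cancel (by omega : 1 ≤ n)] at this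
  have hvar : ∫ x in (a' : ℝ)..b, |G x| ≤ l * (sSup (iteratedDerivWithin (n - 1) f s '' s) -
      sInf (iteratedDerivWithin (n - 1) f s '' s)) := by
    have := integral_abs_deriv_le_mul_sSup_sub_sInf (fun i hi ↦ (htmono i hi).le)
      (by rwa [ht0, htl]) (by rwa [ht0, htl])
      (by rw [ht0, htl]; exact hG.intervalIntegrable_of_Icc hAB.le) hpieces
    rwa [ht0, htl] at this
  have hT : ∀ x, ‖cTail n p x‖ ≤ Tnp n p := norm_cTail_le hn p
  calc ‖(-1 : ℂ) ^ n * ∫ x in (a' : ℝ)..b, cTail n p x * (G x : ℂ)‖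
      = ‖∫ x in (a' : ℝ)..b, cTail n p x * (G x : ℂ)‖ := by simp
    _ ≤ ∫ x in (a' : ℝ)..b, Tnp n p * |G x| :=
        norm_integral_le_of_norm_le hAB.le (ae_of_all _ fun x _ ↦ by
          rw [norm_mul, Complex.norm_real, Real.norm_eq_abs]
          exact mul_le_mul_of_nonneg_right (hT x) (abs_nonneg _))
          ((hG.abs.intervalIntegrable_of_Icc hAB.le).const_mul _)
    _ = Tnp n p * ∫ x in (a' : ℝ)..b, |G x| := integral_const_mul _ _
    _ ≤ Tnp n p * (l * (sSup (iteratedDerivWithin (n - 1) f s '' s) -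
      sInf (iteratedDerivWithin (n - 1) f s '' s))) :=
        mul_le_mul_of_nonneg_left hvar ((norm_nonneg _).trans (hT 0))
    _ = _ := by ring

/-- if `[a',b]` is divided into `l` subintervals on each of which
`f^{(n-1)}` is monotone, then `|R_{np}| ≤ T_{n,p} · l · (M_max − M_min)`, where
`M_max`, `M_min` are the max and min of `f^{(n-1)}` on `[a',b]`. -/
theorem memf_remainder_estimate_monotone_pieces (f : ℝ → ℝ) (a' b : ℤ) (hab : a' < b)
    (n : ℕ) (hn : 2 ≤ n) (p : ℕ) (l : ℕ) (hl : 0 < l)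
    (hf : ContDiffOn ℝ n f (Set.Icc (a' : ℝ) (b : ℝ)))
    (t : ℕ → ℝ) (ht0 : t 0 = (a' : ℝ)) (htl : t l = (b : ℝ))
    (htmono : ∀ i < l, t i < t (i + 1))
    (hpieces : ∀ i < l,
      MonotoneOn (iteratedDerivWithin (n - 1) f (Set.Icc (a' : ℝ) (b : ℝ)))
          (Set.Icc (t i) (t (i + 1))) ∨
        AntitoneOn (iteratedDerivWithin (n - 1) f (Set.Icc (a' : ℝ) (b : ℝ)))
          (Set.Icc (t i) (t (i + 1)))) :
    ‖(-1 : ℂ) ^ n * ∫ x in (a' : ℝ)..(b : ℝ),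
        cTail n p x *
          Complex.ofReal (iteratedDerivWithin n f (Set.Icc (a' : ℝ) (b : ℝ)) x)‖ ≤
      Tnp n p * l *
        (sSup (iteratedDerivWithin (n - 1) f (Set.Icc (a' : ℝ) (b : ℝ)) ''
            Set.Icc (a' : ℝ) (b : ℝ)) -
          sInf (iteratedDerivWithin (n - 1) f (Set.Icc (a' : ℝ) (b : ℝ)) ''
            Set.Icc (a' : ℝ) (b : ℝ))) :=
  memf_remainder_estimate_monotone_pieces_general f a' b hab n hn p l hf t ht0 htl htmono hpieces
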